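/- arXiv:1808.04875 — 3 statements merged into one kernel-verified Lean document; each statement's English description precedes it below -/
import Mathlib

section
/- Suppose all users share identical channel rankings: there is an injective function f : Fin K → ℝ with μ n k = f k for every user n and channel k. Let a : Fin N → Fin K be an injective assignment such that every vacant channel is worse than every occupied channel (for all k not in the range of a and all users n, f k < f (a n)). Then the system potential equals exactly Φ = N(N-1)/2. -/
/-- The potential of user `n` under assignment `a`: the number of channels she strictly
prefers to her own. -/
noncomputable def userPotential {N K : ℕ} (μ : Fin N → Fin K → ℝ) (a : Fin N → Fin K)
    (n : Fin N) : ℕ :=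
  (Finset.univ.filter (fun k : Fin K => μ n k > μ n (a n))).card

/-- The system potential: sum of user potentials. -/
noncomputable def systemPotential {N K : ℕ} (μ : Fin N → Fin K → ℝ) (a : Fin N → Fin K) : ℕ :=
  ∑ n : Fin N, userPotential μ a n

theorem identical_rankings_potential_eq (N K : ℕ) (μ : Fin N → Fin K → ℝ)
    (f : Fin K → ℝ) (hf : Function.Injective f)
    (hμ : ∀ (n : Fin N) (k : Fin K), μ n k = f k)
    (a : Fin N → Fin K) (ha : Function.Injective a)
    (hvacant : ∀ k : Fin K, k ∉ Set.range a → ∀ n : Fin N, f k < f (a n)) :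
    systemPotential μ a = N * (N - 1) / 2 := by
  classical
  set g : Fin N → ℝ := fun n => f (a n) with hg
  have hstep : ∀ n, userPotential μ a n = (Finset.univ.filter (fun m => g n < g m)).card := by
    intro n
    unfold userPotential
    have himg : (Finset.univ.filter (fun k : Fin K => μ n k > μ n (a n)))
        = (Finset.univ.filter (fun m : Fin N => g n < g m)).image a := by
      ext k
      simp only [Finset.mem_filter, Finset.mem_image, Finset.mem_univ, true_and, gt_iff_lt, hμ, hg]
      constructor
      · intro hk
        by_cases hr : k ∈ Set.range a
        · obtain ⟨m, rfl⟩ := hr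
          exact ⟨m, hk, rfl⟩
        · exact absurd (hvacant k hr n) (not_lt.mpr hk.le)
      · rintro ⟨m, hm, rfl⟩; exact hm
    rw [himg, Finset.card_image_of_injective _ ha]
  have hsum : systemPotential μ a
      = ∑ n : Fin N, (Finset.univ.filter (fun m => g n < g m)).card :=
    Finset.sum_congr rfl (fun n _ => hstep n)
  have key : 2 * (∑ n : Fin N, (Finset.univ.filter (fun m => g n < g m)).card) = N * (N - 1) := by
    have hcf : ∀ n : Fin N, (Finset.univ.filter (fun m => g n < g m)).card
        = ∑ m : Fin N, if g n < g m then 1 else 0 := fun n => Finset.card_filter _ _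
    have hswap : (∑ n : Fin N, ∑ m : Fin N, if g n < g m then (1:ℕ) else 0)
        = ∑ n : Fin N, ∑ m : Fin N, if g m < g n then (1:ℕ) else 0 := Finset.sum_comm
    have hpt : ∀ n m : Fin N, ((if g n < g m then (1:ℕ) else 0) + if g m < g n then 1 else 0)
        = if n = m then 0 else 1 := by
      intro n m
      by_cases h : n = m
      · subst h; simp
      · have hne : g n ≠ g m := fun hgeq => h (ha (hf hgeq))
        rcases lt_or_gt_of_ne hne with hlt | hgt
        · simp [hlt, not_lt.mpr hlt.le, h]
        · simp [hgt, not_lt.mpr hgt.le, h]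
    have hinner : ∀ n : Fin N, (∑ m : Fin N, if n = m then (0:ℕ) else 1) = N - 1 := by
      intro n
      rw [Finset.sum_ite]
      have he : (Finset.filter (fun x => ¬n = x) Finset.univ) = Finset.univ.erase n := by
        ext x; simp [eq_comm]
      simp [he, Finset.card_erase_of_mem]
    calc 2 * ∑ n : Fin N, (Finset.univ.filter (fun m => g n < g m)).card
        = (∑ n : Fin N, ∑ m : Fin N, if g n < g m then 1 else 0)
          + (∑ n : Fin N, ∑ m : Fin N, if g m < g n then 1 else 0) := by
          have hS : (∑ n : Fin N, (Finset.univ.filter (fun m => g n < g m)).card)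
              = ∑ n : Fin N, ∑ m : Fin N, if g n < g m then 1 else 0 :=
            Finset.sum_congr rfl fun n _ => hcf n
          rw [hS, ← hswap, two_mul]
      _ = ∑ n : Fin N, ∑ m : Fin N, ((if g n < g m then (1:ℕ) else 0) + if g m < g n then 1 else 0) := by
          rw [← Finset.sum_add_distrib]
          exact Finset.sum_congr rfl fun n _ => (Finset.sum_add_distrib).symm
      _ = ∑ n : Fin N, ∑ m : Fin N, if n = m then 0 else 1 := by
          exact Finset.sum_congr rfl fun n _ => Finset.sum_congr rfl fun m _ => hpt n m
      _ = ∑ n : Fin N, (N - 1) := Finset.sum_congr rfl fun n _ => hinner n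
      _ = N * (N - 1) := by simp [Finset.sum_const, mul_comm]
  rw [hsum]
  omega
end

section
/- Let arm i yield s_i i.i.d. samples in [0,1] with mean μ_i and arm j yield s_j i.i.d. samples in [0,1] with mean μ_j, all samples mutually independent, with μ_i < μ_j and Δ = μ_j - μ_i. Let t > 1 and suppose s_i ≥ 8 ln t / Δ². Then the probability that the UCB indices satisfy μ̂_i + √(2 ln t / s_i) ≥ μ̂_j + √(2 ln t / s_j) is at most 2 t^{-4}. -/
/-! Write `c_s = √(2 ln t / s)`. The sample-size condition gives `c_i ≤ Δ / 2`, so outside the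
events `μ_i + c_i ≤ μ̂_i` and `μ̂_j ≤ μ_j - c_j` we get `μ̂_i + c_i < μ_i + 2 c_i ≤ μ_j < μ̂_j + c_j`.
By Hoeffding's inequality each of the two events has probability at most
`exp (-2 s c_s²) = t⁻⁴`. -/

open MeasureTheory ProbabilityTheory Real

section Hoeffding

variable {Ω : Type*} [MeasurableSpace Ω] {P : Measure Ω} [IsProbabilityMeasure P]
  {n : ℕ} {Z : Fin n → Ω → ℝ} {a b p ε : ℝ}

lemma measureReal_sum_sub_ge_le_of_mem_Icc (hZ : ∀ i, AEMeasurable (Z i) P)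
    (hindep : iIndepFun Z P) (hval : ∀ i, ∀ᵐ ω ∂P, Z i ω ∈ Set.Icc a b)
    (hmean : ∀ i, P[Z i] = p) (hε : 0 ≤ ε) :
    P.real {ω | n * ε ≤ ∑ i, (Z i ω - p)} ≤ exp (-2 * n * ε ^ 2 / (b - a) ^ 2) := by
  have hcentered : iIndepFun (fun i ω ↦ Z i ω - p) P :=
    hindep.comp (fun _ x ↦ x - p) fun _ ↦ measurable_sub_const p
  have hsubG : ∀ i ∈ Finset.univ, HasSubgaussianMGF (fun ω ↦ Z i ω - p)
      ((‖b - a‖₊ / 2) ^ 2) P := fun i _ ↦ by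
    simpa only [hmean i] using hasSubgaussianMGF_of_mem_Icc (hZ i) (hval i)
  refine (HasSubgaussianMGF.measure_sum_ge_le_of_iIndepFun hcentered hsubG
    (by positivity)).trans_eq ?_
  congr 1
  simp only [Finset.sum_const, Finset.card_univ, Fintype.card_fin, nsmul_eq_mul,
    NNReal.coe_mul, NNReal.coe_natCast, NNReal.coe_pow, NNReal.coe_div, coe_nnnorm,
    Real.norm_eq_abs, NNReal.coe_ofNat, div_pow, sq_abs]
  rcases eq_or_ne (b - a) 0 with hab | hab
  · simp [hab]
  rcases n.eq_zero_or_pos with rfl | hn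
  · simp
  field_simp

lemma measureReal_empiricalMean_ge_le (hn : 0 < n) (hZ : ∀ i, AEMeasurable (Z i) P)
    (hindep : iIndepFun Z P) (hval : ∀ i, ∀ᵐ ω ∂P, Z i ω ∈ Set.Icc a b)
    (hmean : ∀ i, P[Z i] = p) (hε : 0 ≤ ε) :
    P.real {ω | p + ε ≤ (∑ i, Z i ω) / n} ≤ exp (-2 * n * ε ^ 2 / (b - a) ^ 2) := by
  convert measureReal_sum_sub_ge_le_of_mem_Icc hZ hindep hval hmean hε using 2
  ext ω
  have hn' : (0 : ℝ) < n := Nat.cast_pos.2 hn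
  rw [Set.mem_ofPred_eq, Set.mem_ofPred_eq, Finset.sum_sub_distrib, Finset.sum_const,
    Finset.card_univ, Fintype.card_fin, nsmul_eq_mul, le_div_iff₀ hn']
  constructor <;> intro h <;> linarith

lemma measureReal_empiricalMean_le_le (hn : 0 < n) (hZ : ∀ i, AEMeasurable (Z i) P)
    (hindep : iIndepFun Z P) (hval : ∀ i, ∀ᵐ ω ∂P, Z i ω ∈ Set.Icc a b)
    (hmean : ∀ i, P[Z i] = p) (hε : 0 ≤ ε) :
    P.real {ω | (∑ i, Z i ω) / n ≤ p - ε} ≤ exp (-2 * n * ε ^ 2 / (b - a) ^ 2) := by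
  have hneg := measureReal_empiricalMean_ge_le (Z := fun i ω ↦ -Z i ω) (p := -p) hn
    (fun i ↦ (hZ i).neg) (hindep.comp (fun _ x ↦ -x) fun _ ↦ measurable_neg)
    (fun i ↦ (hval i).mono fun _ h ↦ ⟨neg_le_neg h.2, neg_le_neg h.1⟩)
    (fun i ↦ by rw [integral_neg, hmean i]) hε
  convert hneg using 2
  · ext ω
    simp only [Set.mem_ofPred_eq, Finset.sum_neg_distrib, neg_div]
    constructor <;> intro h <;> linarith
  · ring

end Hoeffding

lemma sqrt_two_mul_log_div_le_half {s t Δ : ℝ} (hs : 0 < s) (hΔ : 0 < Δ)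
    (hsΔ : 8 * log t / Δ ^ 2 ≤ s) : √(2 * log t / s) ≤ Δ / 2 := by
  rw [div_le_iff₀ (by positivity)] at hsΔ
  calc √(2 * log t / s) ≤ √((Δ / 2) ^ 2) := by
        gcongr
        rw [div_le_iff₀ hs]
        linarith
    _ = Δ / 2 := sqrt_sq (by positivity)

lemma exp_neg_two_mul_sq_sqrt_two_mul_log_div {s t : ℝ} (hs : 0 < s) (ht : 1 ≤ t) :
    exp (-2 * s * √(2 * log t / s) ^ 2) = (t ^ 4)⁻¹ := by
  have hlog : 0 ≤ log t := log_nonneg ht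
  rw [sq_sqrt (by positivity), show -2 * s * (2 * log t / s) = -log (t ^ 4) by
    rw [log_pow]; field_simp; ring, exp_neg, exp_log (by positivity)]

theorem ucb_index_comparison_bound_general {Ω : Type*} [MeasurableSpace Ω]
    (P : Measure Ω) [IsProbabilityMeasure P]
    (si sj : ℕ) (hsi : 0 < si) (hsj : 0 < sj)
    (X : Fin si → Ω → ℝ) (Y : Fin sj → Ω → ℝ)
    (hmeasX : ∀ i, Measurable (X i)) (hmeasY : ∀ j, Measurable (Y j))
    (hindep : iIndepFun (Sum.elim X Y) P)
    (hvalX : ∀ i, ∀ᵐ ω ∂P, X i ω ∈ Set.Icc (0 : ℝ) 1)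
    (hvalY : ∀ j, ∀ᵐ ω ∂P, Y j ω ∈ Set.Icc (0 : ℝ) 1)
    (μi μj : ℝ)
    (hmeanX : ∀ i, ∫ ω, X i ω ∂P = μi) (hmeanY : ∀ j, ∫ ω, Y j ω ∂P = μj)
    (hlt : μi < μj) (Δ : ℝ) (hΔ : Δ = μj - μi)
    (t : ℝ) (ht : 1 < t)
    (hsamples : (si : ℝ) ≥ 8 * Real.log t / Δ ^ 2) :
    P {ω | (∑ i, X i ω) / si + Real.sqrt (2 * Real.log t / si)
          ≥ (∑ j, Y j ω) / sj + Real.sqrt (2 * Real.log t / sj)}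
      ≤ ENNReal.ofReal (2 / t ^ 4) := by
  have hsi' : (0 : ℝ) < si := Nat.cast_pos.2 hsi
  have hsj' : (0 : ℝ) < sj := Nat.cast_pos.2 hsj
  have hA := measureReal_empiricalMean_ge_le hsi (fun i ↦ (hmeasX i).aemeasurable)
    (hindep.precomp Sum.inl_injective :) hvalX hmeanX (sqrt_nonneg (2 * log t / si))
  have hB := measureReal_empiricalMean_le_le hsj (fun j ↦ (hmeasY j).aemeasurable)
    (hindep.precomp Sum.inr_injective :) hvalY hmeanY (sqrt_nonneg (2 * log t / sj))
  rw [sub_zero, one_pow, div_one, exp_neg_two_mul_sq_sqrt_two_mul_log_div hsi' ht.le] at hA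
  rw [sub_zero, one_pow, div_one, exp_neg_two_mul_sq_sqrt_two_mul_log_div hsj' ht.le] at hB
  have hci : √(2 * log t / si) ≤ Δ / 2 :=
    sqrt_two_mul_log_div_le_half hsi' (by linarith) hsamples
  set ci := √(2 * log t / si)
  set cj := √(2 * log t / sj)
  have hsub : {ω | (∑ i, X i ω) / si + ci ≥ (∑ j, Y j ω) / sj + cj} ⊆
      {ω | μi + ci ≤ (∑ i, X i ω) / si} ∪ {ω | (∑ j, Y j ω) / sj ≤ μj - cj} := by
    intro ω hω
    by_contra! h
    simp only [Set.mem_union, Set.mem_ofPred_eq, not_or, not_le] at hω h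
    linarith
  rw [ENNReal.le_ofReal_iff_toReal_le (measure_ne_top _ _) (by positivity)]
  calc P.real _ ≤ P.real ({ω | μi + ci ≤ (∑ i, X i ω) / si} ∪
        {ω | (∑ j, Y j ω) / sj ≤ μj - cj}) := measureReal_mono hsub
    _ ≤ (t ^ 4)⁻¹ + (t ^ 4)⁻¹ := (measureReal_union_le _ _).trans (add_le_add hA hB)
    _ = 2 / t ^ 4 := by ring

theorem ucb_index_comparison_bound {Ω : Type*} [MeasurableSpace Ω]
    (P : Measure Ω) [IsProbabilityMeasure P]
    (si sj : ℕ) (hsi : 0 < si) (hsj : 0 < sj)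
    (X : Fin si → Ω → ℝ) (Y : Fin sj → Ω → ℝ)
    (hmeasX : ∀ i, Measurable (X i)) (hmeasY : ∀ j, Measurable (Y j))
    (hindep : iIndepFun (Sum.elim X Y) P)
    (hidentX : ∀ i i' : Fin si, Measure.map (X i) P = Measure.map (X i') P)
    (hidentY : ∀ j j' : Fin sj, Measure.map (Y j) P = Measure.map (Y j') P)
    (hvalX : ∀ i, ∀ᵐ ω ∂P, X i ω ∈ Set.Icc (0 : ℝ) 1)
    (hvalY : ∀ j, ∀ᵐ ω ∂P, Y j ω ∈ Set.Icc (0 : ℝ) 1)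
    (μi μj : ℝ)
    (hmeanX : ∀ i, ∫ ω, X i ω ∂P = μi) (hmeanY : ∀ j, ∫ ω, Y j ω ∂P = μj)
    (hlt : μi < μj) (Δ : ℝ) (hΔ : Δ = μj - μi)
    (t : ℝ) (ht : 1 < t)
    (hsamples : (si : ℝ) ≥ 8 * Real.log t / Δ ^ 2) :
    P {ω | (∑ i, X i ω) / si + Real.sqrt (2 * Real.log t / si)
          ≥ (∑ j, Y j ω) / sj + Real.sqrt (2 * Real.log t / sj)}
      ≤ ENNReal.ofReal (2 / t ^ 4) :=
  ucb_index_comparison_bound_general P si sj hsi hsj X Y hmeasX hmeasY hindep hvalX hvalY μi μj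
    hmeanX hmeanY hlt Δ hΔ t ht hsamples
end

section
/- Let μ_i < μ_j be reals with Δ = μ_j - μ_i, let t > 1, let s_i, s_j be positive integers with s_i ≥ 8 ln t / Δ², and set c_i = √(2 ln t / s_i), c_j = √(2 ln t / s_j). If two reals μ̂_i, μ̂_j satisfy μ̂_i < μ_i + c_i and μ̂_j > μ_j - c_j, then μ̂_i + c_i < μ̂_j + c_j. -/
theorem ucb_deterministic_comparison (μi μj : ℝ) (hlt : μi < μj)
    (Δ : ℝ) (hΔ : Δ = μj - μi)
    (t : ℝ) (ht : 1 < t)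
    (si sj : ℕ) (hsi : 0 < si) (hsj : 0 < sj)
    (hsamples : (si : ℝ) ≥ 8 * Real.log t / Δ ^ 2)
    (ci cj : ℝ)
    (hci : ci = Real.sqrt (2 * Real.log t / si))
    (hcj : cj = Real.sqrt (2 * Real.log t / sj))
    (μhi μhj : ℝ)
    (hμhi : μhi < μi + ci) (hμhj : μhj > μj - cj) :
    μhi + ci < μhj + cj := by
  have hΔpos : 0 < Δ := by rw [hΔ]; linarith
  have hsipos : (0:ℝ) < si := by exact_mod_cast hsi
  have hL : 0 < Real.log t := Real.log_pos ht
  have hkey : 2 * Real.log t / si ≤ Δ ^ 2 / 4 := by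
    rw [div_le_div_iff₀ hsipos (by norm_num)]
    have := (div_le_iff₀ (by positivity : (0:ℝ) < Δ ^ 2)).mp hsamples
    nlinarith
  have hci2 : ci ≤ Δ / 2 := by
    rw [hci]
    calc Real.sqrt (2 * Real.log t / si) ≤ Real.sqrt (Δ ^ 2 / 4) :=
          Real.sqrt_le_sqrt hkey
      _ = Δ / 2 := by
          rw [show Δ ^ 2 / 4 = (Δ / 2) ^ 2 by ring, Real.sqrt_sq (by linarith)]
  have hcjpos : 0 ≤ cj := by rw [hcj]; positivity
  linarith
end
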